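/- arXiv:2502.00772 — 8 statements merged into one kernel-verified Lean document; each statement's English description precedes it below -/
import Mathlib

section
/- Let μ be a finite Borel measure in ℝⁿ with compact support and θ ∈ (0,1]. Then the upper θ-intermediate dimension of μ (defined with the condition holding for μ-almost every x ∈ supp(μ)) equals the infimum of all s ≥ 0 for which there exist c > 0 and δ₀ > 0 such that for every δ < δ₀ and EVERY x ∈ supp(μ) there exists r ∈ [δ^{1/θ}, δ] with μ(B(x,r)) ≥ c·r^s. -/
open MeasureTheory Metric Set Filter
open scoped ENNReal NNReal

noncomputable section

/-- The support of a measure: points all of whose closed balls have positive measure. -/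
def msupp {X : Type*} [PseudoMetricSpace X] [MeasurableSpace X] (μ : Measure X) : Set X :=
  {x | ∀ r : ℝ, 0 < r → 0 < μ (closedBall x r)}

/-- The upper θ-intermediate dimension of a measure. -/
def dimTheta {X : Type*} [PseudoMetricSpace X] [MeasurableSpace X]
    (μ : Measure X) (θ : ℝ) : ℝ≥0∞ :=
  sInf (ENNReal.ofReal '' {s : ℝ | 0 ≤ s ∧ ∃ c > 0, ∃ δ₀ > 0, ∀ δ : ℝ, 0 < δ → δ < δ₀ →
    ∀ x ∈ msupp μ, ∃ r ∈ Icc (δ ^ (1/θ)) δ,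
      ENNReal.ofReal (c * r ^ s) ≤ μ (closedBall x r)})

/-- The upper θ-intermediate dimension, defined with an a.e. condition. -/
def dimThetaAE {X : Type*} [PseudoMetricSpace X] [MeasurableSpace X]
    (μ : Measure X) (θ : ℝ) : ℝ≥0∞ :=
  sInf (ENNReal.ofReal '' {s : ℝ | 0 ≤ s ∧ ∃ c > 0, ∃ δ₀ > 0,
    ∀ᵐ x ∂μ, ∀ δ : ℝ, 0 < δ → δ < δ₀ → ∃ r ∈ Icc (δ ^ (1/θ)) δ,
      ENNReal.ofReal (c * r ^ s) ≤ μ (closedBall x r)})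

/-- Almost every point lies in `msupp μ` (second countable space). -/
lemma ae_mem_msupp {X : Type*} [PseudoMetricSpace X] [MeasurableSpace X]
    [SecondCountableTopology X] (μ : Measure X) :
    ∀ᵐ x ∂μ, x ∈ msupp μ := by
  rw [Filter.eventually_iff, mem_ae_iff]
  -- complement of msupp is covered by balls of measure zero
  have hchoice : ∀ y : ((msupp μ)ᶜ : Set X), ∃ ρ : ℝ, 0 < ρ ∧ μ (closedBall (y : X) ρ) = 0 := by
    rintro ⟨y, hy⟩
    simp only [msupp, mem_compl_iff, mem_setOf_eq, not_forall] at hy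
    obtain ⟨ρ, hρ, hμρ⟩ := hy
    exact ⟨ρ, hρ, by simpa using hμρ⟩
  choose ρ hρpos hρzero using hchoice
  set s : ((msupp μ)ᶜ : Set X) → Set X := fun y => ball (y : X) (ρ y) with hs
  obtain ⟨T, hTc, hT⟩ := TopologicalSpace.isOpen_iUnion_countable s (fun y => isOpen_ball)
  have hsub : {x | x ∈ msupp μ}ᶜ ⊆ ⋃ y ∈ T, s y := by
    intro x hx
    rw [hT]
    exact mem_iUnion.2 ⟨⟨x, hx⟩, mem_ball_self (hρpos ⟨x, hx⟩)⟩
  refine measure_mono_null hsub ?_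
  refine (measure_biUnion_null_iff hTc).2 fun y _ => ?_
  exact measure_mono_null ball_subset_closedBall (hρzero y)

theorem stmt3 {n : ℕ} (μ : Measure (EuclideanSpace ℝ (Fin n))) [IsFiniteMeasure μ]
    (hsupp : IsCompact (msupp μ)) (θ : ℝ) (hθ : θ ∈ Set.Ioc (0:ℝ) 1) :
    dimThetaAE μ θ = dimTheta μ θ := by
  obtain ⟨hθ0, hθ1⟩ := hθ
  have hinvθ : (1:ℝ) ≤ 1/θ := by
    rw [le_div_iff₀ hθ0]; linarith
  have hinvθ0 : (0:ℝ) < 1/θ := lt_of_lt_of_le one_pos hinvθ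
  suffices h : {s : ℝ | 0 ≤ s ∧ ∃ c > 0, ∃ δ₀ > 0,
      ∀ᵐ x ∂μ, ∀ δ : ℝ, 0 < δ → δ < δ₀ → ∃ r ∈ Icc (δ ^ (1/θ)) δ,
        ENNReal.ofReal (c * r ^ s) ≤ μ (closedBall x r)} =
      {s : ℝ | 0 ≤ s ∧ ∃ c > 0, ∃ δ₀ > 0, ∀ δ : ℝ, 0 < δ → δ < δ₀ →
        ∀ x ∈ msupp μ, ∃ r ∈ Icc (δ ^ (1/θ)) δ,
          ENNReal.ofReal (c * r ^ s) ≤ μ (closedBall x r)} by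
    rw [dimThetaAE, dimTheta, h]
  apply Set.Subset.antisymm
  · -- AE set ⊆ everywhere set
    rintro s ⟨hs0, c, hc, δ₀, hδ₀, hae⟩
    -- constants
    set K : ℝ := (2:ℝ) ^ (1/θ) with hK
    have hK2 : (2:ℝ) ≤ K := by
      calc (2:ℝ) = 2 ^ (1:ℝ) := (Real.rpow_one 2).symm
        _ ≤ K := Real.rpow_le_rpow_of_exponent_le one_le_two hinvθ
    have hK0 : (0:ℝ) < K := lt_of_lt_of_le (by norm_num) hK2
    have hKs : (0:ℝ) < K ^ s := Real.rpow_pos_of_pos hK0 s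
    refine ⟨hs0, c / K ^ s, div_pos hc hKs, min δ₀ 1, lt_min hδ₀ one_pos, ?_⟩
    intro δ hδ hδlt x hx
    have hδδ₀ : δ < δ₀ := lt_of_lt_of_le hδlt (min_le_left _ _)
    have hδ1 : δ ≤ 1 := le_of_lt (lt_of_lt_of_le hδlt (min_le_right _ _))
    set ρ : ℝ := (δ/2) ^ (1/θ) with hρ
    have hρ0 : 0 < ρ := Real.rpow_pos_of_pos (by linarith) _
    -- find a good point y near x
    set G : Set (EuclideanSpace ℝ (Fin n)) :=
      {y | ∀ δ : ℝ, 0 < δ → δ < δ₀ → ∃ r ∈ Icc (δ ^ (1/θ)) δ,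
        ENNReal.ofReal (c * r ^ s) ≤ μ (closedBall y r)} with hG
    have hGc : μ Gᶜ = 0 := ae_iff.1 hae
    have hball : 0 < μ (closedBall x ρ) := hx ρ hρ0
    have hmeas : μ (closedBall x ρ ∩ G) ≠ 0 := by
      intro h0
      have : μ (closedBall x ρ) ≤ μ (closedBall x ρ ∩ G) + μ Gᶜ := by
        refine le_trans (measure_mono ?_) (measure_union_le _ _)
        intro z hz
        by_cases hzG : z ∈ G
        · exact Or.inl ⟨hz, hzG⟩
        · exact Or.inr hzG
      rw [h0, hGc] at this
      simp at this
      exact hball.ne' this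
    obtain ⟨y, hyx, hyG⟩ := nonempty_of_measure_ne_zero hmeas
    -- apply the good property at y, scale δ/2
    obtain ⟨r, ⟨hr1, hr2⟩, hrm⟩ := hyG (δ/2) (by linarith) (by linarith)
    have hr0 : 0 < r := lt_of_lt_of_le hρ0 hr1
    set r' : ℝ := max (r + ρ) (δ ^ (1/θ)) with hr'
    have hρr : ρ ≤ r := hr1
    have hr'δ : r' ≤ δ := by
      refine max_le (by linarith) ?_
      calc δ ^ (1/θ) ≤ δ ^ (1:ℝ) := Real.rpow_le_rpow_of_exponent_ge hδ hδ1 hinvθ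
        _ = δ := Real.rpow_one δ
    have hr'K : r' ≤ K * r := by
      refine max_le (by nlinarith) ?_
      have : δ ^ (1/θ) = K * ρ := by
        rw [hK, hρ, ← Real.mul_rpow (by norm_num) (by linarith)]
        congr 1
        ring
      rw [this]
      exact mul_le_mul_of_nonneg_left hρr (le_of_lt hK0)
    refine ⟨r', ⟨le_max_right _ _, hr'δ⟩, ?_⟩
    have hsub : closedBall y r ⊆ closedBall x r' := by
      apply closedBall_subset_closedBall'
      have : dist y x ≤ ρ := hyx
      have h1 : r + dist y x ≤ r + ρ := by linarith
      exact le_trans h1 (le_max_left _ _)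
    refine le_trans ?_ (le_trans hrm (measure_mono hsub))
    apply ENNReal.ofReal_le_ofReal
    have hr'0 : 0 ≤ r' := le_trans (le_of_lt hρ0) (le_trans hρr (le_trans (by linarith) (le_max_left _ _)))
    have h1 : r' ^ s ≤ (K * r) ^ s := Real.rpow_le_rpow hr'0 hr'K hs0
    have h2 : (K * r) ^ s = K ^ s * r ^ s := Real.mul_rpow (le_of_lt hK0) (le_of_lt hr0)
    calc c / K ^ s * r' ^ s ≤ c / K ^ s * (K ^ s * r ^ s) := by
          rw [h2] at h1
          exact mul_le_mul_of_nonneg_left h1 (le_of_lt (div_pos hc hKs))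
      _ = c * r ^ s := by field_simp
  · -- everywhere set ⊆ AE set
    rintro s ⟨hs0, c, hc, δ₀, hδ₀, hall⟩
    refine ⟨hs0, c, hc, δ₀, hδ₀, ?_⟩
    filter_upwards [ae_mem_msupp μ] with x hx
    intro δ hδ hδlt
    exact hall δ hδ hδlt x hx
end
end

section
/- Let μ be a finite Borel measure with compact support in ℝⁿ and let 0 < θ ≤ φ ≤ 1. Then dim_φ(μ) ≤ (φ/θ)·dim_θ(μ), where dim_θ denotes the upper θ-intermediate dimension of the measure. In particular, if dim_θ(μ) = 0 for some θ ∈ (0,1], then the upper Minkowski dimension of μ is 0. -/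
open MeasureTheory Metric Set Filter
open scoped ENNReal NNReal

noncomputable section

/-- The upper Minkowski (box) dimension of a measure. -/
def dimB {X : Type*} [PseudoMetricSpace X] [MeasurableSpace X] (μ : Measure X) : ℝ≥0∞ :=
  sInf (ENNReal.ofReal '' {s : ℝ | 0 ≤ s ∧ ∃ c > 0, ∀ x ∈ msupp μ, ∀ r : ℝ, 0 < r → r < 1 →
    ENNReal.ofReal (c * r ^ s) ≤ μ (closedBall x r)})

def Sθ {X : Type*} [PseudoMetricSpace X] [MeasurableSpace X] (μ : Measure X) (θ : ℝ) : Set ℝ :=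
  {s : ℝ | 0 ≤ s ∧ ∃ c > 0, ∃ δ₀ > 0, ∀ δ : ℝ, 0 < δ → δ < δ₀ →
    ∀ x ∈ msupp μ, ∃ r ∈ Icc (δ ^ (1/θ)) δ,
      ENNReal.ofReal (c * r ^ s) ≤ μ (closedBall x r)}

lemma key {X : Type*} [PseudoMetricSpace X] [MeasurableSpace X] (μ : Measure X)
    (θ φ s : ℝ) (hθ : 0 < θ) (hθφ : θ ≤ φ) (hφ : φ ≤ 1) (hs : s ∈ Sθ μ θ) :
    (φ/θ) * s ∈ Sθ μ φ := by
  have hφ0 : 0 < φ := hθ.trans_le hθφ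
  obtain ⟨hs0, c, hc, δ₀, hδ₀, H⟩ := hs
  refine ⟨mul_nonneg (div_nonneg hφ0.le hθ.le) hs0, c, hc, min δ₀ 1, lt_min hδ₀ one_pos, ?_⟩
  intro δ hδ hδ' x hx
  have hδ1 : δ < 1 := hδ'.trans_le (min_le_right _ _)
  obtain ⟨r, ⟨hr1, hr2⟩, hr3⟩ := H δ hδ (hδ'.trans_le (min_le_left _ _)) x hx
  have hrpos : 0 < r := lt_of_lt_of_le (Real.rpow_pos_of_pos hδ _) hr1
  have hratio : (1:ℝ) ≤ φ/θ := (one_le_div hθ).mpr hθφ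
  by_cases hcase : δ ^ (1/φ) ≤ r
  · refine ⟨r, ⟨hcase, hr2⟩, le_trans (ENNReal.ofReal_le_ofReal ?_) hr3⟩
    have : r ^ ((φ/θ) * s) ≤ r ^ s := by
      apply Real.rpow_le_rpow_of_exponent_ge hrpos (hr2.trans hδ1.le)
      nlinarith
    nlinarith [Real.rpow_nonneg hrpos.le ((φ/θ)*s)]
  · push_neg at hcase
    refine ⟨δ ^ (1/φ), ⟨le_refl _, ?_⟩, ?_⟩
    · calc δ ^ (1/φ) ≤ δ ^ (1:ℝ) :=
            Real.rpow_le_rpow_of_exponent_ge hδ hδ1.le (one_le_one_div hφ0 hφ)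
        _ = δ := Real.rpow_one δ
    · have hsub : closedBall x r ⊆ closedBall x (δ ^ (1/φ)) :=
        closedBall_subset_closedBall hcase.le
      refine le_trans (ENNReal.ofReal_le_ofReal ?_) (le_trans hr3 (μ.mono hsub))
      have h1 : (δ ^ (1/φ)) ^ ((φ/θ) * s) = δ ^ (s/θ) := by
        rw [← Real.rpow_mul hδ.le]
        congr 1
        field_simp
      have h2 : δ ^ (s/θ) ≤ r ^ s := by
        have e : δ ^ (s/θ) = (δ ^ (1/θ)) ^ s := by
          rw [← Real.rpow_mul hδ.le]; ring_nf
        rw [e]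
        exact Real.rpow_le_rpow (Real.rpow_nonneg hδ.le _) hr1 hs0
      rw [h1]
      nlinarith

lemma memB {X : Type*} [PseudoMetricSpace X] [MeasurableSpace X] (μ : Measure X)
    (s : ℝ) (hs : s ∈ Sθ μ 1) :
    s ∈ {s : ℝ | 0 ≤ s ∧ ∃ c > 0, ∀ x ∈ msupp μ, ∀ r : ℝ, 0 < r → r < 1 →
      ENNReal.ofReal (c * r ^ s) ≤ μ (closedBall x r)} := by
  obtain ⟨hs0, c, hc, δ₀, hδ₀, H⟩ := hs
  set ρ : ℝ := min (δ₀/2) (1/2) with hρ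
  have hρ0 : 0 < ρ := lt_min (by linarith) (by norm_num)
  have hρδ : ρ < δ₀ := (min_le_left _ _).trans_lt (by linarith)
  have hρ1 : ρ ≤ 1 := (min_le_right _ _).trans (by norm_num)
  have hρs : ρ ^ s ≤ 1 := Real.rpow_le_one hρ0.le hρ1 hs0
  have hρsp : 0 < ρ ^ s := Real.rpow_pos_of_pos hρ0 s
  refine ⟨hs0, c * ρ ^ s, by positivity, ?_⟩
  intro x hx r hr hr1
  have hrs : 0 < r ^ s := Real.rpow_pos_of_pos hr s
  have hrs1 : r ^ s ≤ 1 := Real.rpow_le_one hr.le hr1.le hs0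
  by_cases h : r < δ₀
  · obtain ⟨r', ⟨h1, h2⟩, h3⟩ := H r hr h x hx
    have hr' : r' = r := le_antisymm h2 (by simpa using h1)
    subst hr'
    refine le_trans (ENNReal.ofReal_le_ofReal ?_) h3
    nlinarith [mul_nonneg (mul_nonneg hc.le (sub_nonneg.mpr hρs)) hrs.le]
  · push_neg at h
    obtain ⟨r', ⟨h1, h2⟩, h3⟩ := H ρ hρ0 hρδ x hx
    have hr' : r' = ρ := le_antisymm h2 (by simpa using h1)
    subst hr'
    have hsub : closedBall x ρ ⊆ closedBall x r :=
      closedBall_subset_closedBall (hρδ.le.trans h)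
    refine le_trans (ENNReal.ofReal_le_ofReal ?_) (h3.trans (μ.mono hsub))
    nlinarith [mul_nonneg (mul_nonneg hc.le hρsp.le) (sub_nonneg.mpr hrs1)]

lemma dim_le {X : Type*} [PseudoMetricSpace X] [MeasurableSpace X] (μ : Measure X)
    (θ φ : ℝ) (hθ : 0 < θ) (hθφ : θ ≤ φ) (hφ : φ ≤ 1) :
    dimTheta μ φ ≤ ENNReal.ofReal (φ / θ) * dimTheta μ θ := by
  have hφ0 : 0 < φ := hθ.trans_le hθφ
  have hq : 0 < φ / θ := div_pos hφ0 hθ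
  have ha0 : ENNReal.ofReal (φ/θ) ≠ 0 := by
    simp [ENNReal.ofReal_eq_zero, not_le, hq]
  have hdd : dimTheta μ θ = sInf (ENNReal.ofReal '' Sθ μ θ) := rfl
  rcases eq_empty_or_nonempty (Sθ μ θ) with h | h
  · rw [hdd, h]
    simp [ENNReal.mul_top ha0]
  · haveI : Nonempty (Sθ μ θ) := h.to_subtype
    have e1 : ENNReal.ofReal (φ/θ) * dimTheta μ θ
        = ⨅ t : Sθ μ θ, ENNReal.ofReal (φ/θ) * ENNReal.ofReal t := by
      rw [hdd, sInf_image', ENNReal.mul_iInf_of_ne ha0 ENNReal.ofReal_ne_top]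
    rw [e1]
    refine le_iInf fun t => ?_
    have h2 := key μ θ φ t hθ hθφ hφ t.2
    calc dimTheta μ φ ≤ ENNReal.ofReal ((φ/θ) * t) := sInf_le ⟨_, h2, rfl⟩
      _ = ENNReal.ofReal (φ/θ) * ENNReal.ofReal t := ENNReal.ofReal_mul hq.le

theorem stmt5 {n : ℕ} (μ : Measure (EuclideanSpace ℝ (Fin n))) [IsFiniteMeasure μ]
    (hsupp : IsCompact (msupp μ)) (θ φ : ℝ) (hθ : 0 < θ) (hθφ : θ ≤ φ) (hφ : φ ≤ 1) :
    dimTheta μ φ ≤ ENNReal.ofReal (φ / θ) * dimTheta μ θ ∧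
    (dimTheta μ θ = 0 → dimB μ = 0) := by
  refine ⟨dim_le μ θ φ hθ hθφ hφ, fun h0 => ?_⟩
  have h2 : dimTheta μ 1 = 0 := by
    have := dim_le μ θ 1 hθ (hθφ.trans hφ) le_rfl
    rw [h0, mul_zero] at this
    exact le_antisymm this zero_le
  have h3 : dimB μ ≤ dimTheta μ 1 := by
    apply sInf_le_sInf
    rintro a ⟨s, hsS, rfl⟩
    exact ⟨s, memB μ s hsS, rfl⟩
  exact le_antisymm (h3.trans_eq h2) zero_le
end
end

section
/- For every finite Borel measure μ with compact support in ℝⁿ, the map θ ↦ dim_θ(μ) (upper θ-intermediate dimension of μ) is continuous on the interval (0,1]. -/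
open MeasureTheory Metric Set Filter Topology
open scoped ENNReal NNReal

noncomputable section

namespace DimThetaAux

variable {X : Type*} [PseudoMetricSpace X] [MeasurableSpace X] (μ : Measure X)

/-- The defining set of exponents. -/
def A (θ : ℝ) : Set ℝ :=
  {s : ℝ | 0 ≤ s ∧ ∃ c > 0, ∃ δ₀ > 0, ∀ δ : ℝ, 0 < δ → δ < δ₀ →
    ∀ x ∈ msupp μ, ∃ r ∈ Icc (δ ^ (1/θ)) δ,
      ENNReal.ofReal (c * r ^ s) ≤ μ (closedBall x r)}

lemma dimTheta_eq (θ : ℝ) : dimTheta μ θ = sInf (ENNReal.ofReal '' A μ θ) := rfl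

lemma A_mono {θ φ : ℝ} (hθ : 0 < θ) (hθφ : θ ≤ φ) : A μ φ ⊆ A μ θ := by
  rintro s ⟨hs, c, hc, δ₀, hδ₀, h⟩
  refine ⟨hs, c, hc, min δ₀ 1, lt_min hδ₀ one_pos, ?_⟩
  intro δ hδ hδlt x hx
  obtain ⟨r, hr, hμ⟩ := h δ hδ (hδlt.trans_le (min_le_left _ _)) x hx
  refine ⟨r, ⟨le_trans ?_ hr.1, hr.2⟩, hμ⟩
  have hδ1 : δ ≤ 1 := le_of_lt (hδlt.trans_le (min_le_right _ _))
  exact Real.rpow_le_rpow_of_exponent_ge hδ hδ1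
    (one_div_le_one_div_of_le hθ hθφ)

lemma dimTheta_mono {θ φ : ℝ} (hθ : 0 < θ) (hθφ : θ ≤ φ) :
    dimTheta μ θ ≤ dimTheta μ φ :=
  sInf_le_sInf (Set.image_mono (A_mono μ hθ hθφ))

lemma A_scale {θ φ : ℝ} (hθ : 0 < θ) (hθφ : θ ≤ φ) (hφ1 : φ ≤ 1)
    {s : ℝ} (hs : s ∈ A μ θ) : φ / θ * s ∈ A μ φ := by
  have hφ : 0 < φ := hθ.trans_le hθφ
  obtain ⟨hs0, c, hc, δ₀, hδ₀, h⟩ := hs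
  have hratio1 : (1:ℝ) ≤ φ / θ := (one_le_div hθ).2 hθφ
  refine ⟨by positivity, c, hc, min δ₀ 1, lt_min hδ₀ one_pos, ?_⟩
  intro δ hδ hδlt x hx
  obtain ⟨r, hr, hμ⟩ := h δ hδ (hδlt.trans_le (min_le_left _ _)) x hx
  have hδ1 : δ < 1 := hδlt.trans_le (min_le_right _ _)
  have hrpos : 0 < r := lt_of_lt_of_le (Real.rpow_pos_of_pos hδ _) hr.1
  have hr1 : r ≤ 1 := le_of_lt (lt_of_le_of_lt hr.2 hδ1)
  have hss' : s ≤ φ / θ * s := le_mul_of_one_le_left hs0 hratio1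
  rcases le_or_gt (δ ^ (1/φ)) r with hcase | hcase
  · refine ⟨r, ⟨hcase, hr.2⟩, le_trans ?_ hμ⟩
    apply ENNReal.ofReal_le_ofReal
    apply mul_le_mul_of_nonneg_left _ (le_of_lt hc)
    exact Real.rpow_le_rpow_of_exponent_ge hrpos hr1 hss'
  · refine ⟨δ ^ (1/φ), ⟨le_refl _, ?_⟩, ?_⟩
    · calc δ ^ (1/φ) ≤ δ ^ (1:ℝ) :=
            Real.rpow_le_rpow_of_exponent_ge hδ hδ1.le ((one_le_one_div hφ hφ1))
        _ = δ := Real.rpow_one δ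
    · have hmono : μ (closedBall x r) ≤ μ (closedBall x (δ ^ (1/φ))) :=
        measure_mono (closedBall_subset_closedBall hcase.le)
      refine le_trans (le_trans ?_ hμ) hmono
      apply ENNReal.ofReal_le_ofReal
      apply mul_le_mul_of_nonneg_left _ (le_of_lt hc)
      have h1 : (δ ^ (1/φ)) ^ (φ / θ * s) = δ ^ (s / θ) := by
        rw [← Real.rpow_mul hδ.le]
        congr 1
        field_simp
      rw [h1]
      have h2 : δ ^ (s / θ) = (δ ^ (1/θ)) ^ s := by
        rw [← Real.rpow_mul hδ.le]
        congr 1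
        field_simp
      rw [h2]
      exact Real.rpow_le_rpow (Real.rpow_pos_of_pos hδ _).le hr.1 hs0

lemma dimTheta_scale {θ φ : ℝ} (hθ : 0 < θ) (hθφ : θ ≤ φ) (hφ1 : φ ≤ 1) :
    dimTheta μ φ ≤ ENNReal.ofReal (φ / θ) * dimTheta μ θ := by
  have hφ : 0 < φ := hθ.trans_le hθφ
  have hr0 : 0 < φ / θ := div_pos hφ hθ
  have hc0 : ENNReal.ofReal (φ / θ) ≠ 0 := by
    simp [ENNReal.ofReal_eq_zero, not_le, hr0]
  have hctop : ENNReal.ofReal (φ / θ) ≠ ∞ := ENNReal.ofReal_ne_top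
  have hrw : ENNReal.ofReal (φ / θ) * dimTheta μ θ
      = ⨅ a ∈ A μ θ, ENNReal.ofReal (φ / θ) * ENNReal.ofReal a := by
    rw [dimTheta_eq, sInf_image, ENNReal.mul_iInf_of_ne hc0 hctop]
    exact iInf_congr fun a => ENNReal.mul_iInf_of_ne hc0 hctop
  rw [hrw, dimTheta_eq]
  refine le_iInf₂ fun a ha => ?_
  have hmem : φ / θ * a ∈ A μ φ := A_scale μ hθ hθφ hφ1 ha
  calc sInf (ENNReal.ofReal '' A μ φ) ≤ ENNReal.ofReal (φ / θ * a) :=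
        sInf_le ⟨_, hmem, rfl⟩
    _ = ENNReal.ofReal (φ / θ) * ENNReal.ofReal a := ENNReal.ofReal_mul hr0.le

end DimThetaAux

theorem stmt6 {n : ℕ} (μ : Measure (EuclideanSpace ℝ (Fin n))) [IsFiniteMeasure μ]
    (hsupp : IsCompact (msupp μ)) :
    ContinuousOn (fun θ : ℝ => dimTheta μ θ) (Set.Ioc (0:ℝ) 1) := by
  intro θ₀ hθ₀
  obtain ⟨hθ₀pos, hθ₀1⟩ := hθ₀
  by_cases hfin : dimTheta μ θ₀ = ∞
  · have hall : ∀ φ ∈ Set.Ioc (0:ℝ) 1, dimTheta μ φ = (∞ : ℝ≥0∞) := by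
      intro φ hφ
      rcases le_total θ₀ φ with h | h
      · exact top_le_iff.1 (hfin ▸ DimThetaAux.dimTheta_mono μ hθ₀pos h)
      · by_contra hne
        have hle := DimThetaAux.dimTheta_scale μ hφ.1 h hθ₀1
        rw [hfin] at hle
        exact (ENNReal.mul_ne_top ENNReal.ofReal_ne_top hne) (top_le_iff.1 hle)
    exact (continuousWithinAt_const (b := (∞ : ℝ≥0∞))).congr hall
      (hall θ₀ ⟨hθ₀pos, hθ₀1⟩)
  · -- squeeze
    have hD := hfin
    set D := dimTheta μ θ₀ with hDdef
    have hmcont : ContinuousAt (fun φ : ℝ => ENNReal.ofReal (min (φ/θ₀) (θ₀/φ))) θ₀ := by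
      apply ENNReal.continuous_ofReal.continuousAt.comp
      exact ((continuousAt_id.div continuousAt_const hθ₀pos.ne').min
        (continuousAt_const.div continuousAt_id hθ₀pos.ne'))
    have hMcont : ContinuousAt (fun φ : ℝ => ENNReal.ofReal (max (φ/θ₀) (θ₀/φ))) θ₀ := by
      apply ENNReal.continuous_ofReal.continuousAt.comp
      exact ((continuousAt_id.div continuousAt_const hθ₀pos.ne').max
        (continuousAt_const.div continuousAt_id hθ₀pos.ne'))
    have hval : min (θ₀/θ₀) (θ₀/θ₀) = (1:ℝ) := by rw [div_self hθ₀pos.ne']; simp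
    have hval' : max (θ₀/θ₀) (θ₀/θ₀) = (1:ℝ) := by rw [div_self hθ₀pos.ne']; simp
    have hl : Tendsto (fun φ : ℝ => ENNReal.ofReal (min (φ/θ₀) (θ₀/φ)) * D)
        (𝓝[Set.Ioc (0:ℝ) 1] θ₀) (𝓝 D) := by
      have := (hmcont.continuousWithinAt (s := Set.Ioc (0:ℝ) 1)).tendsto
      simp only [hval, ENNReal.ofReal_one] at this
      have h2 := ENNReal.Tendsto.mul_const (b := D) this (Or.inl one_ne_zero)
      rwa [one_mul] at h2
    have hu : Tendsto (fun φ : ℝ => ENNReal.ofReal (max (φ/θ₀) (θ₀/φ)) * D)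
        (𝓝[Set.Ioc (0:ℝ) 1] θ₀) (𝓝 D) := by
      have := (hMcont.continuousWithinAt (s := Set.Ioc (0:ℝ) 1)).tendsto
      simp only [hval', ENNReal.ofReal_one] at this
      have h2 := ENNReal.Tendsto.mul_const (b := D) this (Or.inl one_ne_zero)
      rwa [one_mul] at h2
    have hmem : ∀ᶠ φ in 𝓝[Set.Ioc (0:ℝ) 1] θ₀, φ ∈ Set.Ioc (0:ℝ) 1 :=
      eventually_mem_nhdsWithin
    have hlow : ∀ᶠ φ in 𝓝[Set.Ioc (0:ℝ) 1] θ₀,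
        ENNReal.ofReal (min (φ/θ₀) (θ₀/φ)) * D ≤ dimTheta μ φ := by
      filter_upwards [hmem] with φ hφ
      rcases le_total φ θ₀ with h | h
      · have hmin : min (φ/θ₀) (θ₀/φ) = φ/θ₀ :=
          min_eq_left (le_trans (div_le_one_of_le₀ h hθ₀pos.le)
            ((one_le_div hφ.1).2 h))
        rw [hmin]
        have hs := DimThetaAux.dimTheta_scale μ hφ.1 h hθ₀1
        have hprod : (φ/θ₀) * (θ₀/φ) = 1 := by
          field_simp
          exact div_self hφ.1.ne'
        calc ENNReal.ofReal (φ/θ₀) * D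
            ≤ ENNReal.ofReal (φ/θ₀) * (ENNReal.ofReal (θ₀/φ) * dimTheta μ φ) :=
              mul_le_mul_right hs _
          _ = ENNReal.ofReal ((φ/θ₀) * (θ₀/φ)) * dimTheta μ φ := by
              rw [← mul_assoc, ← ENNReal.ofReal_mul (div_nonneg hφ.1.le hθ₀pos.le)]
          _ = dimTheta μ φ := by rw [hprod, ENNReal.ofReal_one, one_mul]
      · have h1 : min (φ/θ₀) (θ₀/φ) ≤ 1 := by
          apply min_le_of_right_le
          exact div_le_one_of_le₀ h hφ.1.le
        calc ENNReal.ofReal (min (φ/θ₀) (θ₀/φ)) * D ≤ 1 * D := by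
              apply mul_le_mul_left
              simpa using ENNReal.ofReal_le_ofReal h1
          _ = D := one_mul D
          _ ≤ dimTheta μ φ := DimThetaAux.dimTheta_mono μ hθ₀pos h
    have hhigh : ∀ᶠ φ in 𝓝[Set.Ioc (0:ℝ) 1] θ₀,
        dimTheta μ φ ≤ ENNReal.ofReal (max (φ/θ₀) (θ₀/φ)) * D := by
      filter_upwards [hmem] with φ hφ
      rcases le_total φ θ₀ with h | h
      · have h1 : (1:ℝ) ≤ max (φ/θ₀) (θ₀/φ) := by
          apply le_max_of_le_right
          exact (one_le_div hφ.1).2 h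
        calc dimTheta μ φ ≤ D := DimThetaAux.dimTheta_mono μ hφ.1 h
          _ = 1 * D := (one_mul D).symm
          _ ≤ ENNReal.ofReal (max (φ/θ₀) (θ₀/φ)) * D := by
              apply mul_le_mul_left
              simpa using ENNReal.ofReal_le_ofReal h1
      · have hmax : max (φ/θ₀) (θ₀/φ) = φ/θ₀ :=
          max_eq_left (le_trans (div_le_one_of_le₀ h hφ.1.le)
            ((one_le_div hθ₀pos).2 h))
        rw [hmax]
        exact DimThetaAux.dimTheta_scale μ hθ₀pos h hφ.2
    exact tendsto_of_tendsto_of_tendsto_of_le_of_le' hl hu hlow hhigh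
end
end

section
/- Let μ be a finite Borel measure with compact support, θ ∈ (0,1], s ≥ 0, c > 0, and let (δₙ) be a decreasing sequence tending to 0 with δ_{n+1} ≥ a·δₙ for some a > 0. If for every n and every x ∈ supp(μ) there exists r ∈ [δₙ^{1/θ}, δₙ] with μ(B(x,r)) ≥ c·r^s, then there exist c' > 0 and δ₀ > 0 such that for every δ < δ₀ and every x ∈ supp(μ) there exists r ∈ [δ^{1/θ}, δ] with μ(B(x,r)) ≥ c'·r^s. In particular dim_θ(μ) ≤ s. -/
open MeasureTheory Metric Set Filter
open scoped ENNReal NNReal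

noncomputable section

theorem stmt8 {n : ℕ} (μ : Measure (EuclideanSpace ℝ (Fin n))) [IsFiniteMeasure μ]
    (hsupp : IsCompact (msupp μ)) (θ : ℝ) (hθ : θ ∈ Set.Ioc (0:ℝ) 1)
    (s c : ℝ) (hs : 0 ≤ s) (hc : 0 < c)
    (δs : ℕ → ℝ) (hpos : ∀ k, 0 < δs k) (hdec : ∀ k, δs (k + 1) ≤ δs k)
    (hlim : Tendsto δs atTop (nhds 0))
    (a : ℝ) (ha : 0 < a) (hratio : ∀ k, a * δs k ≤ δs (k + 1))
    (h : ∀ k, ∀ x ∈ msupp μ, ∃ r ∈ Icc ((δs k) ^ (1/θ)) (δs k),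
      ENNReal.ofReal (c * r ^ s) ≤ μ (closedBall x r)) :
    (∃ c' > 0, ∃ δ₀ > 0, ∀ δ : ℝ, 0 < δ → δ < δ₀ → ∀ x ∈ msupp μ,
      ∃ r ∈ Icc (δ ^ (1/θ)) δ, ENNReal.ofReal (c' * r ^ s) ≤ μ (closedBall x r)) ∧
    dimTheta μ θ ≤ ENNReal.ofReal s := by
  obtain ⟨hθ0, hθ1⟩ := hθ
  have hθinv : (1:ℝ) ≤ 1/θ := by
    rw [le_div_iff₀ hθ0]; linarith
  set c' : ℝ := c * min 1 (a ^ (s/θ)) with hc'def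
  have haθ : (0:ℝ) < a ^ (s/θ) := Real.rpow_pos_of_pos ha _
  have hc' : 0 < c' := mul_pos hc (lt_min one_pos haθ)
  have main : ∀ δ : ℝ, 0 < δ → δ < min (δs 0) 1 → ∀ x ∈ msupp μ,
      ∃ r ∈ Icc (δ ^ (1/θ)) δ, ENNReal.ofReal (c' * r ^ s) ≤ μ (closedBall x r) := by
    intro δ hδ hδlt x hx
    have hδ0 : δ < δs 0 := lt_of_lt_of_le hδlt (min_le_left _ _)
    have hδ1 : δ < 1 := lt_of_lt_of_le hδlt (min_le_right _ _)
    -- find minimal k with δs k ≤ δ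
    have hex : ∃ k, δs k ≤ δ := by
      obtain ⟨k, hk⟩ := (hlim.eventually (eventually_lt_nhds hδ)).exists
      exact ⟨k, hk.le⟩
    classical
    set k := Nat.find hex with hk
    have hkle : δs k ≤ δ := Nat.find_spec hex
    have hkpos : 0 < k := by
      rcases Nat.eq_zero_or_pos k with h0 | h0
      · exfalso; rw [h0] at hkle; linarith
      · exact h0
    have hprev : δ < δs (k - 1) := by
      have := Nat.find_min hex (m := k - 1) (by omega)
      linarith [lt_of_not_ge this]
    have hklb : a * δ ≤ δs k := by
      have := hratio (k - 1)
      have hk1 : k - 1 + 1 = k := by omega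
      rw [hk1] at this
      nlinarith [hprev, ha]
    obtain ⟨r, ⟨hr1, hr2⟩, hμ⟩ := h k x hx
    have hrle : r ≤ δ := hr2.trans hkle
    have hrlb : (a * δ) ^ (1/θ) ≤ r := by
      refine le_trans ?_ hr1
      exact Real.rpow_le_rpow (by positivity) hklb (by positivity)
    have hrpos : 0 < r := lt_of_lt_of_le (Real.rpow_pos_of_pos (by positivity) _) hrlb
    by_cases hcase : δ ^ (1/θ) ≤ r
    · refine ⟨r, ⟨hcase, hrle⟩, le_trans ?_ hμ⟩
      apply ENNReal.ofReal_le_ofReal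
      have : c' ≤ c := by
        rw [hc'def]
        nlinarith [min_le_left 1 (a ^ (s/θ)), hc]
      nlinarith [Real.rpow_nonneg hrpos.le s]
    · push_neg at hcase
      refine ⟨δ ^ (1/θ), ⟨le_refl _, ?_⟩, ?_⟩
      · calc δ ^ (1/θ) ≤ δ ^ (1:ℝ) :=
              Real.rpow_le_rpow_of_exponent_ge hδ hδ1.le hθinv
          _ = δ := Real.rpow_one δ
      · refine le_trans ?_ (le_trans hμ (measure_mono (closedBall_subset_closedBall hcase.le)))
        apply ENNReal.ofReal_le_ofReal
        -- c' * (δ^(1/θ))^s ≤ c * r^s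
        have key : a ^ (s/θ) * (δ ^ (1/θ)) ^ s ≤ r ^ s := by
          have h1 : ((a*δ) ^ (1/θ)) ^ s ≤ r ^ s :=
            Real.rpow_le_rpow (by positivity) hrlb hs
          calc a ^ (s/θ) * (δ ^ (1/θ)) ^ s
              = (a ^ (1/θ)) ^ s * (δ ^ (1/θ)) ^ s := by
                rw [← Real.rpow_mul ha.le]
                ring_nf
            _ = ((a*δ) ^ (1/θ)) ^ s := by
                rw [Real.mul_rpow ha.le hδ.le, Real.mul_rpow (by positivity) (by positivity)]
            _ ≤ r ^ s := h1
        have hmin : min 1 (a ^ (s/θ)) ≤ a ^ (s/θ) := min_le_right _ _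
        have hnn : (0:ℝ) ≤ (δ ^ (1/θ)) ^ s := Real.rpow_nonneg (by positivity) s
        calc c' * (δ ^ (1/θ)) ^ s ≤ c * (a ^ (s/θ) * (δ ^ (1/θ)) ^ s) := by
              rw [hc'def, mul_assoc]; gcongr
          _ ≤ c * r ^ s := by nlinarith
  have hδ₀ : (0:ℝ) < min (δs 0) 1 := lt_min (hpos 0) one_pos
  refine ⟨⟨c', hc', min (δs 0) 1, hδ₀, main⟩, ?_⟩
  apply sInf_le
  exact ⟨s, ⟨hs, c', hc', min (δs 0) 1, hδ₀, main⟩, rfl⟩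
end
end

section
/- Let μ be a finite compactly supported Borel measure on ℝⁿ with finite Assouad dimension dim_A(μ) < ∞, and let θ ∈ (0,1]. Then dim_θ(μ) ≥ dim_A(μ) − (dim_A(μ) − dim_B(μ))/θ, where dim_B(μ) is the upper Minkowski dimension and dim_θ the upper θ-intermediate dimension of μ. -/
open MeasureTheory Metric Set Filter
open scoped ENNReal NNReal

noncomputable section

/-- The Assouad dimension of a measure. -/
def dimA {X : Type*} [PseudoMetricSpace X] [MeasurableSpace X] (μ : Measure X) : ℝ≥0∞ :=
  sInf (ENNReal.ofReal '' {d : ℝ | 0 ≤ d ∧ ∃ c > 0, ∀ x ∈ msupp μ, ∀ r R : ℝ,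
    0 < r → r < R → R < 1 →
    ENNReal.ofReal (c * (r / R) ^ d) * μ (closedBall x R) ≤ μ (closedBall x r)})

lemma uniform_mass {X : Type*} [MetricSpace X] [MeasurableSpace X] (μ : Measure X)
    (hsupp : IsCompact (msupp μ)) (t : ℝ) (ht : 0 < t) :
    ∃ m : ℝ, 0 < m ∧ ∀ x ∈ msupp μ, ENNReal.ofReal m ≤ μ (closedBall x t) := by
  have hcover : msupp μ ⊆ ⋃ y : msupp μ, ball (y : X) (t/2) := by
    intro x hx
    exact mem_iUnion.2 ⟨⟨x, hx⟩, mem_ball_self (by linarith)⟩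
  obtain ⟨F, hF⟩ := hsupp.elim_finite_subcover _ (fun y => isOpen_ball) hcover
  set M : ℝ≥0∞ := F.inf (fun y => μ (closedBall (y : X) (t/2))) with hM
  have hMpos : 0 < M := by
    rw [hM, Finset.lt_inf_iff (by simp : (0:ℝ≥0∞) < ⊤)]
    intro y _
    exact y.2 (t/2) (by linarith)
  refine ⟨(min M 1).toReal, ?_, ?_⟩
  · apply ENNReal.toReal_pos
    · exact (lt_min hMpos zero_lt_one).ne'
    · exact (lt_of_le_of_lt (min_le_right _ _) ENNReal.one_lt_top).ne
  · intro x hx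
    have hxm := hF hx
    simp only [mem_iUnion] at hxm
    obtain ⟨y, hyF, hxy⟩ := hxm
    have hsub : closedBall (y : X) (t/2) ⊆ closedBall x t := by
      intro z hz
      simp only [mem_closedBall] at *
      have h2 : dist (y:X) x < t/2 := by rwa [mem_ball, dist_comm] at hxy
      calc dist z x ≤ dist z (y:X) + dist (y:X) x := dist_triangle _ _ _
        _ ≤ t := by linarith
    calc ENNReal.ofReal (min M 1).toReal = min M 1 := by
          rw [ENNReal.ofReal_toReal]
          exact (lt_of_le_of_lt (min_le_right _ _) ENNReal.one_lt_top).ne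
      _ ≤ M := min_le_left _ _
      _ ≤ μ (closedBall (y : X) (t/2)) := Finset.inf_le hyF
      _ ≤ μ (closedBall x t) := measure_mono hsub

lemma box_mem {X : Type*} [MetricSpace X] [MeasurableSpace X] (μ : Measure X)
    (hsupp : IsCompact (msupp μ)) (θ : ℝ) (hθ0 : 0 < θ) (hθ1 : θ ≤ 1)
    (s : ℝ) (hs : 0 ≤ s) (c : ℝ) (hc : 0 < c) (δ₀ : ℝ) (hδ₀ : 0 < δ₀)
    (hθs : ∀ δ : ℝ, 0 < δ → δ < δ₀ → ∀ x ∈ msupp μ, ∃ r ∈ Icc (δ ^ (1/θ)) δ,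
      ENNReal.ofReal (c * r ^ s) ≤ μ (closedBall x r))
    (d : ℝ) (hd : 0 ≤ d) (c' : ℝ) (hc' : 0 < c')
    (hAd : ∀ x ∈ msupp μ, ∀ r R : ℝ, 0 < r → r < R → R < 1 →
      ENNReal.ofReal (c' * (r / R) ^ d) * μ (closedBall x R) ≤ μ (closedBall x r)) :
    ∃ c₀ > 0, ∀ x ∈ msupp μ, ∀ ρ : ℝ, 0 < ρ → ρ < 1 →
      ENNReal.ofReal (c₀ * ρ ^ (max s (θ*s+(1-θ)*d))) ≤ μ (closedBall x ρ) := by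
  set e := max s (θ*s+(1-θ)*d) with he
  have he0 : 0 ≤ e := le_trans hs (le_max_left _ _)
  set ρ₁ : ℝ := (min δ₀ 1) ^ (1/θ) with hρ₁def
  have hmin : 0 < min δ₀ 1 := lt_min hδ₀ zero_lt_one
  have hρ₁ : 0 < ρ₁ := Real.rpow_pos_of_pos hmin _
  obtain ⟨m, hm, hmass⟩ := uniform_mass μ hsupp ρ₁ hρ₁
  refine ⟨min (min c (c*c')) m, lt_min (lt_min hc (mul_pos hc hc')) hm, ?_⟩
  intro x hx ρ hρ hρ1
  set c₀ := min (min c (c*c')) m with hc₀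
  have hc₀pos : 0 < c₀ := lt_min (lt_min hc (mul_pos hc hc')) hm
  have hρe1 : ρ ^ e ≤ 1 := Real.rpow_le_one hρ.le hρ1.le he0
  rcases lt_or_ge ρ ρ₁ with hcase | hcase
  · -- small scale
    have hδpos : 0 < ρ ^ θ := Real.rpow_pos_of_pos hρ _
    have hδlt : ρ ^ θ < δ₀ := by
      have h1 : ρ ^ θ < ρ₁ ^ θ := Real.rpow_lt_rpow hρ.le hcase hθ0
      have h2 : ρ₁ ^ θ = min δ₀ 1 := by
        rw [hρ₁def, ← Real.rpow_mul hmin.le, one_div_mul_cancel hθ0.ne', Real.rpow_one]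
      calc ρ ^ θ < ρ₁ ^ θ := h1
        _ = min δ₀ 1 := h2
        _ ≤ δ₀ := min_le_left _ _
    obtain ⟨r, hrIcc, hμr⟩ := hθs (ρ ^ θ) hδpos hδlt x hx
    have hfix : (ρ ^ θ) ^ (1/θ) = ρ := by
      rw [← Real.rpow_mul hρ.le, mul_one_div_cancel hθ0.ne', Real.rpow_one]
    rw [hfix] at hrIcc
    obtain ⟨hρr, hrδ⟩ := hrIcc
    have hrpos : 0 < r := lt_of_lt_of_le hρ hρr
    have hδ1 : ρ ^ θ < 1 := Real.rpow_lt_one hρ.le hρ1 hθ0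
    have hr1 : r < 1 := lt_of_le_of_lt hrδ hδ1
    rcases eq_or_lt_of_le hρr with heq | hlt
    · -- r = ρ
      subst heq
      refine le_trans (ENNReal.ofReal_le_ofReal ?_) hμr
      have : ρ ^ e ≤ ρ ^ s :=
        Real.rpow_le_rpow_of_exponent_ge hρ hρ1.le (le_max_left _ _)
      calc c₀ * ρ ^ e ≤ c * ρ ^ s := by
            apply mul_le_mul _ this (Real.rpow_nonneg hρ.le _) hc.le
            exact le_trans (min_le_left _ _) (min_le_left _ _)
        _ = c * ρ ^ s := rfl
    · -- ρ < r : use Assouad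
      have key := hAd x hx ρ r hρ hlt hr1
      have step : ENNReal.ofReal (c' * (ρ / r) ^ d) * ENNReal.ofReal (c * r ^ s)
          ≤ μ (closedBall x ρ) := by
        refine le_trans (mul_le_mul_right hμr _) key
      refine le_trans ?_ step
      rw [← ENNReal.ofReal_mul (by positivity)]
      apply ENNReal.ofReal_le_ofReal
      have hdiv : (ρ / r) ^ d = ρ ^ d / r ^ d := Real.div_rpow hρ.le hrpos.le _
      have hrd : 0 < r ^ d := Real.rpow_pos_of_pos hrpos _
      have claim : ρ ^ e ≤ ρ ^ d * r ^ s / r ^ d := by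
        rcases le_or_gt s d with hsd | hsd
        · have h1 : r ^ s / r ^ d = r ^ (s - d) := (Real.rpow_sub hrpos _ _).symm
          have h2 : (ρ ^ θ) ^ (s - d) ≤ r ^ (s - d) := by
            apply Real.rpow_le_rpow_of_nonpos hrpos hrδ (by linarith)
          have h3 : (ρ ^ θ) ^ (s - d) = ρ ^ (θ * (s - d)) := by
            rw [← Real.rpow_mul hρ.le]
          have h4 : ρ ^ d * ρ ^ (θ * (s - d)) = ρ ^ (d + θ * (s - d)) := by
            rw [Real.rpow_add hρ]
          have h5 : ρ ^ e ≤ ρ ^ (d + θ * (s - d)) := by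
            apply Real.rpow_le_rpow_of_exponent_ge hρ hρ1.le
            have : d + θ * (s - d) = θ*s+(1-θ)*d := by ring
            rw [this]
            exact le_max_right _ _
          calc ρ ^ e ≤ ρ ^ (d + θ * (s - d)) := h5
            _ = ρ ^ d * ρ ^ (θ * (s - d)) := h4.symm
            _ ≤ ρ ^ d * ((ρ ^ θ) ^ (s-d)) := by rw [h3]
            _ ≤ ρ ^ d * (r ^ (s - d)) := by
                exact mul_le_mul_of_nonneg_left h2 (Real.rpow_nonneg hρ.le _)
            _ = ρ ^ d * (r ^ s / r ^ d) := by rw [h1]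
            _ = ρ ^ d * r ^ s / r ^ d := by ring
        · have h2 : ρ ^ (s - d) ≤ r ^ (s - d) :=
            Real.rpow_le_rpow hρ.le hρr (by linarith)
          have h4 : ρ ^ d * ρ ^ (s - d) = ρ ^ s := by
            rw [← Real.rpow_add hρ]; ring_nf
          have h5 : ρ ^ e ≤ ρ ^ s :=
            Real.rpow_le_rpow_of_exponent_ge hρ hρ1.le (le_max_left _ _)
          have h1 : r ^ s / r ^ d = r ^ (s - d) := (Real.rpow_sub hrpos _ _).symm
          calc ρ ^ e ≤ ρ ^ s := h5
            _ = ρ ^ d * ρ ^ (s - d) := h4.symm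
            _ ≤ ρ ^ d * r ^ (s - d) := mul_le_mul_of_nonneg_left h2 (Real.rpow_nonneg hρ.le _)
            _ = ρ ^ d * (r ^ s / r ^ d) := by rw [h1]
            _ = ρ ^ d * r ^ s / r ^ d := by ring
      calc c₀ * ρ ^ e ≤ (c * c') * (ρ ^ d * r ^ s / r ^ d) := by
            apply mul_le_mul _ claim (Real.rpow_nonneg hρ.le _) (by positivity)
            exact le_trans (min_le_left _ _) (min_le_right _ _)
        _ = c' * (ρ ^ d / r ^ d) * (c * r ^ s) := by field_simp
        _ = c' * (ρ / r) ^ d * (c * r ^ s) := by rw [hdiv]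
  · -- large scale
    refine le_trans ?_ (le_trans (hmass x hx) (measure_mono (closedBall_subset_closedBall hcase)))
    apply ENNReal.ofReal_le_ofReal
    calc c₀ * ρ ^ e ≤ m * 1 := by
          apply mul_le_mul (min_le_right _ _) hρe1 (Real.rpow_nonneg hρ.le _) hm.le
      _ = m := mul_one m

theorem stmt11 {n : ℕ} (μ : Measure (EuclideanSpace ℝ (Fin n))) [IsFiniteMeasure μ]
    (hsupp : IsCompact (msupp μ)) (hA : dimA μ ≠ ⊤)
    (θ : ℝ) (hθ : θ ∈ Set.Ioc (0:ℝ) 1) :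
    dimA μ - (dimA μ - dimB μ) / ENNReal.ofReal θ ≤ dimTheta μ θ := by
  obtain ⟨hθ0, hθ1⟩ := hθ
  refine le_sInf ?_
  rintro y ⟨s, ⟨hs0, c, hc, δ₀, hδ₀, hprop⟩, rfl⟩
  set A := dimA μ with hAdef
  set A' := A.toReal with hA'def
  have hAeq : A = ENNReal.ofReal A' := (ENNReal.ofReal_toReal hA).symm
  have hA'0 : 0 ≤ A' := ENNReal.toReal_nonneg
  rcases le_or_gt A (ENNReal.ofReal s) with hcase | hcase
  · exact le_trans tsub_le_self hcase
  -- now s < A'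
  have hsA' : s < A' := by
    rw [hAeq] at hcase
    exact (ENNReal.ofReal_lt_ofReal_iff_of_nonneg hs0).mp hcase
  -- for each ε > 0 extract a valid Assouad exponent d < A' + ε and deduce a box bound
  have hkey : ∀ ε : ℝ, 0 < ε → dimB μ ≤ ENNReal.ofReal (θ*s + (1-θ)*(A'+ε)) := by
    intro ε hε
    have hlt : A < A + ENNReal.ofReal ε :=
      ENNReal.lt_add_right hA (by simpa using (ENNReal.ofReal_pos.mpr hε).ne')
    rw [hAdef, dimA] at hlt
    rw [show sInf (ENNReal.ofReal '' {d : ℝ | 0 ≤ d ∧ ∃ c > 0, ∀ x ∈ msupp μ, ∀ r R : ℝ,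
      0 < r → r < R → R < 1 →
      ENNReal.ofReal (c * (r / R) ^ d) * μ (closedBall x R) ≤ μ (closedBall x r)}) = dimA μ
      from rfl] at hlt
    obtain ⟨z, hz, hzlt⟩ := sInf_lt_iff.mp hlt
    obtain ⟨d, ⟨hd0, c', hc', hAd⟩, rfl⟩ := hz
    have hdA : A ≤ ENNReal.ofReal d := sInf_le ⟨d, ⟨hd0, c', hc', hAd⟩, rfl⟩
    have hsd : s < d := by
      have := lt_of_lt_of_le hcase hdA
      exact (ENNReal.ofReal_lt_ofReal_iff_of_nonneg hs0).mp this
    have hdlt : d < A' + ε := by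
      have : ENNReal.ofReal d < ENNReal.ofReal (A' + ε) := by
        rw [ENNReal.ofReal_add hA'0 hε.le, ← hAeq]; exact hzlt
      exact (ENNReal.ofReal_lt_ofReal_iff_of_nonneg hd0).mp this
    obtain ⟨c₀, hc₀, hbox⟩ := box_mem μ hsupp θ hθ0 hθ1 s hs0 c hc δ₀ hδ₀ hprop d hd0 c' hc'
      hAd
    have hmaxeq : max s (θ*s+(1-θ)*d) = θ*s+(1-θ)*d := by
      apply max_eq_right
      nlinarith
    have hBle : dimB μ ≤ ENNReal.ofReal (θ*s+(1-θ)*d) := by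
      apply sInf_le
      refine ⟨θ*s+(1-θ)*d, ⟨by nlinarith, c₀, hc₀, ?_⟩, rfl⟩
      intro x hx r hr hr1
      have := hbox x hx r hr hr1
      rwa [hmaxeq] at this
    refine le_trans hBle (ENNReal.ofReal_le_ofReal ?_)
    nlinarith
  set B := dimB μ with hBdef
  have hBtop : B ≠ ⊤ :=
    ne_top_of_le_ne_top ENNReal.ofReal_ne_top (hkey 1 zero_lt_one)
  set B' := B.toReal with hB'def
  have hBeq : B = ENNReal.ofReal B' := (ENNReal.ofReal_toReal hBtop).symm
  have hB'0 : 0 ≤ B' := ENNReal.toReal_nonneg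
  have hB'le : B' ≤ θ*s + (1-θ)*A' := by
    apply le_of_forall_pos_le_add
    intro ε hε
    have h1 := hkey ε hε
    have h2 : B' ≤ θ*s + (1-θ)*(A'+ε) := by
      rw [hBeq] at h1
      have := (ENNReal.ofReal_le_ofReal_iff (by nlinarith)).mp h1
      exact this
    nlinarith
  have hBA' : B' ≤ A' := by nlinarith
  rw [hAeq, hBeq, ← ENNReal.ofReal_sub A' hB'0, ← ENNReal.ofReal_div_of_pos hθ0,
    ← ENNReal.ofReal_sub A' (div_nonneg (sub_nonneg.mpr hBA') hθ0.le)]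
  apply ENNReal.ofReal_le_ofReal
  have hdiv : A' - s ≤ (A' - B') / θ := by
    rw [le_div_iff₀ hθ0]
    nlinarith
  linarith
end
end

section
/- Let μ and ν be finite Borel measures with compact support (on ℝⁿ and ℝᵐ respectively) and θ ∈ (0,1]. Then dim_θ(μ × ν) ≤ dim_θ(μ) + dim_B(ν), where dim_θ denotes the upper θ-intermediate dimension of a measure and dim_B the upper Minkowski dimension. -/
open MeasureTheory Metric Set Filter
open scoped ENNReal NNReal

noncomputable section

theorem stmt13 {n m : ℕ} (μ : Measure (EuclideanSpace ℝ (Fin n)))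
    (ν : Measure (EuclideanSpace ℝ (Fin m)))
    [IsFiniteMeasure μ] [IsFiniteMeasure ν]
    (hμ : IsCompact (msupp μ)) (hν : IsCompact (msupp ν))
    (θ : ℝ) (hθ : θ ∈ Set.Ioc (0:ℝ) 1) :
    dimTheta (μ.prod ν) θ ≤ dimTheta μ θ + dimB ν := by
  obtain ⟨hθ0, hθ1⟩ := hθ
  unfold dimTheta dimB
  rw [ENNReal.sInf_add]
  refine le_iInf₂ fun a ha => ?_
  rw [add_comm a, ENNReal.sInf_add]
  refine le_iInf₂ fun b hb => ?_
  rw [add_comm b a]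
  obtain ⟨s, ⟨hs0, c, hc, δ₀, hδ₀, hP⟩, rfl⟩ := ha
  obtain ⟨t, ⟨ht0, c', hc', hQ⟩, rfl⟩ := hb
  rw [← ENNReal.ofReal_add hs0 ht0]
  refine sInf_le ⟨s + t, ⟨by positivity, c * c', by positivity, min δ₀ 1,
    lt_min hδ₀ one_pos, ?_⟩, rfl⟩
  intro δ hδ hδ' z hz
  have hx : z.1 ∈ msupp μ := by
    intro r hr
    have := hz r hr
    rw [← closedBall_prod_same, Measure.prod_prod] at this
    have h1 : μ (closedBall z.1 r) ≠ 0 := fun h => by simp [h] at this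
    exact pos_iff_ne_zero.mpr h1
  have hy : z.2 ∈ msupp ν := by
    intro r hr
    have := hz r hr
    rw [← closedBall_prod_same, Measure.prod_prod] at this
    have h1 : ν (closedBall z.2 r) ≠ 0 := fun h => by simp [h] at this
    exact pos_iff_ne_zero.mpr h1
  obtain ⟨r, hr, hμr⟩ := hP δ hδ (lt_of_lt_of_le hδ' (min_le_left _ _)) z.1 hx
  have hr0 : 0 < r := lt_of_lt_of_le (Real.rpow_pos_of_pos hδ _) hr.1
  have hr1 : r < 1 := lt_of_le_of_lt hr.2 (lt_of_lt_of_le hδ' (min_le_right _ _))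
  have hνr := hQ z.2 hy r hr0 hr1
  refine ⟨r, hr, ?_⟩
  have heq : (μ.prod ν) (closedBall z r) = μ (closedBall z.1 r) * ν (closedBall z.2 r) := by
    rw [← closedBall_prod_same, Measure.prod_prod]
  rw [heq]
  calc ENNReal.ofReal (c * c' * r ^ (s + t))
      = ENNReal.ofReal ((c * r ^ s) * (c' * r ^ t)) := by
        rw [Real.rpow_add hr0]; ring_nf
    _ = ENNReal.ofReal (c * r ^ s) * ENNReal.ofReal (c' * r ^ t) := by
        rw [ENNReal.ofReal_mul (by positivity)]
    _ ≤ μ (closedBall z.1 r) * ν (closedBall z.2 r) := mul_le_mul' hμr hνr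
end
end

section
/- Let Φ be an admissible function with lim_{δ→0} (log δ)/(log Φ(δ)) = 1 and μ a finite compactly supported Borel measure. Then the upper Minkowski dimension of μ equals the upper Φ-intermediate dimension of μ: dim_B(μ) = dim^Φ(μ). -/
open MeasureTheory Metric Set Filter
open scoped ENNReal NNReal

noncomputable section

/-- An admissible function in the sense of Banaji. -/
def Admissible (Φ : ℝ → ℝ) : Prop :=
  ∃ y > 0, (∀ δ ∈ Set.Ioo (0:ℝ) y, 0 < Φ δ ∧ Φ δ ≤ δ) ∧
    Tendsto (fun δ => Φ δ / δ) (nhdsWithin 0 (Set.Ioi 0)) (nhds 0) ∧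
    MonotoneOn Φ (Set.Ioo 0 y)

/-- The upper Φ-intermediate dimension of a measure. -/
def dimPhiMeas {X : Type*} [PseudoMetricSpace X] [MeasurableSpace X]
    (Φ : ℝ → ℝ) (μ : Measure X) : ℝ≥0∞ :=
  sInf (ENNReal.ofReal '' {s : ℝ | 0 ≤ s ∧ ∃ c > 0, ∃ δ₀ > 0, ∀ δ : ℝ, 0 < δ → δ < δ₀ →
    ∀ x ∈ msupp μ, ∃ r ∈ Icc (Φ δ) δ,
      ENNReal.ofReal (c * r ^ s) ≤ μ (closedBall x r)})

theorem stmt15 {n : ℕ} (Φ : ℝ → ℝ) (hΦ : Admissible Φ)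
    (hlim : Tendsto (fun δ => Real.log δ / Real.log (Φ δ))
      (nhdsWithin 0 (Set.Ioi 0)) (nhds 1))
    (μ : Measure (EuclideanSpace ℝ (Fin n))) [IsFiniteMeasure μ]
    (hsupp : IsCompact (msupp μ)) :
    dimB μ = dimPhiMeas Φ μ := by
  obtain ⟨y, hy, hadm, _, _⟩ := hΦ
  apply le_antisymm
  · -- hard direction: dimB ≤ dimPhiMeas
    apply le_sInf
    rintro b ⟨s, ⟨hs0, c, hc, δ₀, hδ₀, H⟩, rfl⟩
    apply ENNReal.le_of_forall_pos_le_add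
    intro ε hε _
    have hεR : (0:ℝ) < (ε:ℝ) := hε
    set t : ℝ := s + (ε:ℝ) with ht_def
    have ht : 0 < t := by positivity
    have hst : s < t := by simp [ht_def]; positivity
    have hcoe : ENNReal.ofReal s + (ε : ℝ≥0∞) = ENNReal.ofReal t := by
      rw [ht_def, ENNReal.ofReal_add hs0 hεR.le, ENNReal.ofReal_coe_nnreal]
    rw [hcoe]
    -- eventually log δ / log (Φ δ) > s / t
    have hst1 : s / t < 1 := (div_lt_one ht).mpr hst
    have hP : ∀ᶠ ρ in nhdsWithin (0:ℝ) (Set.Ioi 0),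
        s / t < Real.log ρ / Real.log (Φ ρ) := hlim.eventually (eventually_gt_nhds hst1)
    obtain ⟨u, hu, hIoo⟩ := mem_nhdsGT_iff_exists_Ioo_subset.mp hP
    have hu0 : (0:ℝ) < u := hu
    set ρ₁ : ℝ := min (min u δ₀) (min y 1) / 2 with hρ₁_def
    have hρ₁ : 0 < ρ₁ := by
      have := lt_min (lt_min hu0 hδ₀) (lt_min hy one_pos)
      positivity
    have hρ₁u : ρ₁ < u := by
      have h1 : min (min u δ₀) (min y 1) ≤ u := le_trans (min_le_left _ _) (min_le_left _ _)
      rw [hρ₁_def]; linarith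
    have hρ₁δ₀ : ρ₁ < δ₀ := by
      have h1 : min (min u δ₀) (min y 1) ≤ δ₀ := le_trans (min_le_left _ _) (min_le_right _ _)
      rw [hρ₁_def]; linarith
    have hρ₁y : ρ₁ < y := by
      have h1 : min (min u δ₀) (min y 1) ≤ y := le_trans (min_le_right _ _) (min_le_left _ _)
      rw [hρ₁_def]; linarith
    have hρ₁1 : ρ₁ < 1 := by
      have h1 : min (min u δ₀) (min y 1) ≤ 1 := le_trans (min_le_right _ _) (min_le_right _ _)
      rw [hρ₁_def]; linarith
    -- compactness: uniform lower bound for large radii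
    obtain ⟨F, hFmem, hFcov⟩ := hsupp.elim_nhds_subcover
      (fun z => ball z (ρ₁ / 2)) (fun z _ => ball_mem_nhds z (by positivity))
    set m : ℝ≥0∞ := F.inf (fun z => μ (closedBall z (ρ₁ / 2))) with hm_def
    have hm : 0 < m := by
      rw [hm_def, Finset.lt_inf_iff ENNReal.zero_lt_top]
      intro z hz
      exact hFmem z hz (ρ₁ / 2) (by positivity)
    set m' : ℝ≥0∞ := min m 1 with hm'_def
    have hm'0 : 0 < m' := lt_min hm one_pos
    have hm'top : m' ≠ ⊤ := by
      rw [hm'_def]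
      exact ne_top_of_le_ne_top ENNReal.one_ne_top (min_le_right _ _)
    have hm't : 0 < m'.toReal := ENNReal.toReal_pos hm'0.ne' hm'top
    set c' : ℝ := min c m'.toReal with hc'_def
    have hc' : 0 < c' := lt_min hc hm't
    refine sInf_le ⟨t, ⟨ht.le, c', hc', ?_⟩, rfl⟩
    intro x hx r hr hr1
    rcases lt_or_ge r ρ₁ with hcase | hcase
    · -- small radii: use the Φ-intermediate assumption
      have hry : r < y := hcase.trans hρ₁y
      have hΦr := hadm r ⟨hr, hry⟩
      obtain ⟨r', ⟨h1, h2⟩, hμ⟩ := H r hr (hcase.trans hρ₁δ₀) x hx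
      have hPr : s / t < Real.log r / Real.log (Φ r) := hIoo ⟨hr, hcase.trans hρ₁u⟩
      have hrlt1 : r < 1 := hcase.trans hρ₁1
      have key : r ^ t ≤ (Φ r) ^ s := by
        rcases eq_or_lt_of_le hs0 with hs | hs
        · rw [← hs, Real.rpow_zero]
          exact Real.rpow_le_one hr.le hrlt1.le ht.le
        · have hΦlt1 : Φ r < 1 := lt_of_le_of_lt hΦr.2 hrlt1
          have hlogΦ : Real.log (Φ r) < 0 := Real.log_neg hΦr.1 hΦlt1
          have h3 : Real.log r / Real.log (Φ r) * Real.log (Φ r) = Real.log r :=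
            div_mul_cancel₀ _ hlogΦ.ne
          have h4 : Real.log r < s / t * Real.log (Φ r) := by
            have := mul_lt_mul_of_neg_right hPr hlogΦ
            rwa [h3] at this
          have h5 : Real.log r * t < Real.log (Φ r) * s := by
            have h6 := mul_lt_mul_of_pos_right h4 ht
            have h7 : s / t * Real.log (Φ r) * t = Real.log (Φ r) * s := by
              field_simp
            rwa [h7] at h6
          rw [Real.rpow_def_of_pos hr, Real.rpow_def_of_pos hΦr.1]
          exact Real.exp_le_exp.mpr h5.le
      have key2 : c' * r ^ t ≤ c * r' ^ s := by
        have hr's : (Φ r) ^ s ≤ r' ^ s :=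
          Real.rpow_le_rpow hΦr.1.le h1 hs0
        have : r ^ t ≤ r' ^ s := key.trans hr's
        have hrt : 0 ≤ r ^ t := Real.rpow_nonneg hr.le t
        exact mul_le_mul (min_le_left _ _) this hrt hc.le
      calc ENNReal.ofReal (c' * r ^ t) ≤ ENNReal.ofReal (c * r' ^ s) :=
            ENNReal.ofReal_le_ofReal key2
        _ ≤ μ (closedBall x r') := hμ
        _ ≤ μ (closedBall x r) := measure_mono (closedBall_subset_closedBall h2)
    · -- large radii: use compactness bound
      have hxcov := hFcov hx
      simp only [Set.mem_iUnion] at hxcov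
      obtain ⟨z, hzF, hxz⟩ := hxcov
      have hball : closedBall z (ρ₁ / 2) ⊆ closedBall x r := by
        apply closedBall_subset_closedBall'
        have : dist z x < ρ₁ / 2 := by rw [dist_comm]; exact mem_ball.mp hxz
        linarith
      have hμz : m ≤ μ (closedBall z (ρ₁ / 2)) := Finset.inf_le hzF
      have hbound : ENNReal.ofReal (c' * r ^ t) ≤ m' := by
        have hrt1 : r ^ t ≤ 1 := Real.rpow_le_one hr.le hr1.le ht.le
        have : c' * r ^ t ≤ m'.toReal := by
          have h1 : c' * r ^ t ≤ c' * 1 := by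
            apply mul_le_mul_of_nonneg_left hrt1 hc'.le
          have h2 : c' ≤ m'.toReal := min_le_right _ _
          linarith
        calc ENNReal.ofReal (c' * r ^ t) ≤ ENNReal.ofReal (m'.toReal) :=
              ENNReal.ofReal_le_ofReal this
          _ = m' := ENNReal.ofReal_toReal hm'top
      calc ENNReal.ofReal (c' * r ^ t) ≤ m' := hbound
        _ ≤ m := min_le_left _ _
        _ ≤ μ (closedBall z (ρ₁ / 2)) := hμz
        _ ≤ μ (closedBall x r) := measure_mono hball
  · -- easy direction: dimPhiMeas ≤ dimB
    apply le_sInf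
    rintro b ⟨s, ⟨hs0, c, hc, H⟩, rfl⟩
    refine sInf_le ⟨s, ⟨hs0, c, hc, min y 1, lt_min hy one_pos, ?_⟩, rfl⟩
    intro δ hδ hδ' x hx
    have hδy : δ < y := lt_of_lt_of_le hδ' (min_le_left _ _)
    have hδ1 : δ < 1 := lt_of_lt_of_le hδ' (min_le_right _ _)
    exact ⟨δ, ⟨(hadm δ ⟨hδ, hδy⟩).2, le_refl δ⟩, H x hx δ hδ hδ1⟩
end
end

section
/- Let μ be a finite Borel measure, θ ∈ (0,1], 0 ≤ t ≤ s ≤ m, and 0 < r < 1. Then −(s−t) ≤ (log C_{r,θ}^{s,m}(μ)/(−log r) − s) − (log C_{r,θ}^{t,m}(μ)/(−log r) − t) ≤ −θ(s−t). -/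
open MeasureTheory Metric Set Filter
open scoped ENNReal NNReal

noncomputable section

/-- The kernel φ_{r,θ}^{s,m}. -/
def phiKer {X : Type*} [NormedAddCommGroup X] (r θ s m : ℝ) (x : X) : ℝ :=
  if ‖x‖ ≤ r then 1
  else if ‖x‖ ≤ r ^ θ then r ^ s / ‖x‖ ^ s
  else r ^ (θ * (m - s) + s) / ‖x‖ ^ m

/-- The capacity C_{r,θ}^{s,m}(μ). -/
def capac {X : Type*} [NormedAddCommGroup X] [MeasurableSpace X]
    (μ : Measure X) (r θ s m : ℝ) : ℝ :=
  (⨅ x : msupp μ, ∫ y, phiKer r θ s m ((x : X) - y) ∂μ)⁻¹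

section helpers
variable {X : Type*} [NormedAddCommGroup X] {r θ s t m : ℝ}

lemma phi_nonneg (hr0 : 0 < r) (x : X) : 0 ≤ phiKer r θ s m x := by
  unfold phiKer; split_ifs with h1 h2 <;> positivity

lemma phi_le_one (hr0 : 0 < r) (hr1 : r < 1) (hθ1 : θ ≤ 1) (hs0 : 0 ≤ s)
    (hsm : s ≤ m) (x : X) : phiKer r θ s m x ≤ 1 := by
  have hm0 : 0 ≤ m := hs0.trans hsm
  unfold phiKer
  split_ifs with h1 h2
  · exact le_refl 1
  · have hx0 : (0:ℝ) < ‖x‖ := hr0.trans (lt_of_not_ge h1)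
    rw [div_le_one (Real.rpow_pos_of_pos hx0 s)]
    exact Real.rpow_le_rpow hr0.le (le_of_not_ge h1) hs0
  · have hx0 : (0:ℝ) < ‖x‖ := hr0.trans (lt_of_not_ge h1)
    rw [div_le_one (Real.rpow_pos_of_pos hx0 m)]
    calc r ^ (θ * (m - s) + s) ≤ r ^ (θ * m) :=
          Real.rpow_le_rpow_of_exponent_ge hr0 hr1.le (by nlinarith)
      _ = (r ^ θ) ^ m := Real.rpow_mul hr0.le θ m
      _ ≤ ‖x‖ ^ m := Real.rpow_le_rpow (by positivity) (le_of_not_ge h2) hm0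

lemma phi_mono (hr0 : 0 < r) (hr1 : r < 1) (hθ1 : θ ≤ 1) (hts : t ≤ s)
    (x : X) : phiKer r θ s m x ≤ phiKer r θ t m x := by
  unfold phiKer
  split_ifs with h1 h2
  · exact le_refl 1
  · have hx : r < ‖x‖ := lt_of_not_ge h1
    rw [← Real.div_rpow hr0.le (norm_nonneg x), ← Real.div_rpow hr0.le (norm_nonneg x)]
    exact Real.rpow_le_rpow_of_exponent_ge (div_pos hr0 (hr0.trans hx))
      ((div_le_one (hr0.trans hx)).2 hx.le) hts
  · have hx0 : (0:ℝ) < ‖x‖ := hr0.trans (lt_of_not_ge h1)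
    exact (div_le_div_iff_of_pos_right (Real.rpow_pos_of_pos hx0 m)).mpr
      (Real.rpow_le_rpow_of_exponent_ge hr0 hr1.le (by nlinarith))

lemma phi_le_c_mul (hr0 : 0 < r) (hr1 : r < 1) (hθ1 : θ ≤ 1) (hts : t ≤ s)
    (x : X) : phiKer r θ t m x ≤ r ^ ((t - s) * (1 - θ)) * phiKer r θ s m x := by
  have hc1 : (1:ℝ) ≤ r ^ ((t - s) * (1 - θ)) :=
    Real.one_le_rpow_of_pos_of_le_one_of_nonpos hr0 hr1.le (by nlinarith)
  unfold phiKer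
  split_ifs with h1 h2
  · simpa using hc1
  · have hx0 : (0:ℝ) < ‖x‖ := hr0.trans (lt_of_not_ge h1)
    have hxθ : ‖x‖ ≤ r ^ θ := h2
    have key : ‖x‖ ^ (s - t) ≤ r ^ (θ * (s - t)) := by
      calc ‖x‖ ^ (s - t) ≤ (r ^ θ) ^ (s - t) :=
            Real.rpow_le_rpow (norm_nonneg x) hxθ (by linarith)
        _ = r ^ (θ * (s - t)) := (Real.rpow_mul hr0.le θ (s - t)).symm
    rw [mul_div_assoc', div_le_div_iff₀ (Real.rpow_pos_of_pos hx0 t) (Real.rpow_pos_of_pos hx0 s)]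
    have e1 : ‖x‖ ^ s = ‖x‖ ^ t * ‖x‖ ^ (s - t) := by
      rw [← Real.rpow_add hx0]; congr 1; ring
    have e2 : r ^ ((t - s) * (1 - θ)) * r ^ s = r ^ t * r ^ (θ * (s - t)) := by
      rw [← Real.rpow_add hr0, ← Real.rpow_add hr0]; congr 1; ring
    rw [e1, e2]
    calc r ^ t * (‖x‖ ^ t * ‖x‖ ^ (s - t)) = r ^ t * ‖x‖ ^ t * ‖x‖ ^ (s - t) := by ring
      _ ≤ r ^ t * ‖x‖ ^ t * r ^ (θ * (s - t)) :=
          mul_le_mul_of_nonneg_left key (by positivity)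
      _ = r ^ t * r ^ (θ * (s - t)) * ‖x‖ ^ t := by ring
  · have he : r ^ (θ * (m - t) + t) = r ^ ((t - s) * (1 - θ)) * r ^ (θ * (m - s) + s) := by
      rw [← Real.rpow_add hr0]; congr 1; ring
    rw [he, mul_div_assoc]

end helpers

lemma phi_meas {X : Type*} [NormedAddCommGroup X] [MeasurableSpace X] [OpensMeasurableSpace X]
    (r θ s m : ℝ) (x : X) : Measurable fun y => phiKer r θ s m (x - y) := by
  have hn : Measurable fun y : X => ‖x - y‖ :=
    (continuous_const.sub continuous_id).norm.measurable
  unfold phiKer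
  refine Measurable.ite (measurableSet_le hn measurable_const) measurable_const ?_
  refine Measurable.ite (measurableSet_le hn measurable_const) ?_ ?_
  · exact measurable_const.div (by measurability)
  · exact measurable_const.div (by measurability)

theorem stmt16 {n : ℕ} (μ : Measure (EuclideanSpace ℝ (Fin n))) [IsFiniteMeasure μ]
    (θ : ℝ) (hθ : θ ∈ Set.Ioc (0:ℝ) 1) (t s m : ℝ)
    (ht : 0 ≤ t) (hts : t ≤ s) (hsm : s ≤ m)
    (r : ℝ) (hr0 : 0 < r) (hr1 : r < 1) :
    -(s - t) ≤ (Real.log (capac μ r θ s m) / (-Real.log r) - s) -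
        (Real.log (capac μ r θ t m) / (-Real.log r) - t) ∧
    (Real.log (capac μ r θ s m) / (-Real.log r) - s) -
        (Real.log (capac μ r θ t m) / (-Real.log r) - t) ≤ -(θ * (s - t)) := by
  obtain ⟨hθ0, hθ1⟩ := hθ
  have hs0 : 0 ≤ s := ht.trans hts
  have hlr : Real.log r < 0 := Real.log_neg hr0 hr1
  have hL : 0 < -Real.log r := by linarith
  set c : ℝ := r ^ ((t - s) * (1 - θ)) with hc
  have hc1 : (1:ℝ) ≤ c := Real.one_le_rpow_of_pos_of_le_one_of_nonpos hr0 hr1.le (by nlinarith)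
  have hc0 : (0:ℝ) < c := lt_of_lt_of_le one_pos hc1
  have hint : ∀ u : ℝ, 0 ≤ u → u ≤ m → ∀ x : EuclideanSpace ℝ (Fin n),
      Integrable (fun y => phiKer r θ u m (x - y)) μ := by
    intro u hu0 hum x
    refine (integrable_const (1:ℝ)).mono' (phi_meas r θ u m x).aestronglyMeasurable ?_
    filter_upwards with y
    rw [Real.norm_eq_abs, abs_of_nonneg (phi_nonneg hr0 _)]
    exact phi_le_one hr0 hr1 hθ1 hu0 hum _
  set A := ⨅ x : msupp μ, ∫ y, phiKer r θ s m ((x : EuclideanSpace ℝ (Fin n)) - y) ∂μ with hA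
  set B := ⨅ x : msupp μ, ∫ y, phiKer r θ t m ((x : EuclideanSpace ℝ (Fin n)) - y) ∂μ with hB
  have hcapS : capac μ r θ s m = A⁻¹ := rfl
  have hcapT : capac μ r θ t m = B⁻¹ := rfl
  have hdeg : -(s - t) ≤ (Real.log (0:ℝ) / (-Real.log r) - s) -
        (Real.log (0:ℝ) / (-Real.log r) - t) ∧
      (Real.log (0:ℝ) / (-Real.log r) - s) -
        (Real.log (0:ℝ) / (-Real.log r) - t) ≤ -(θ * (s - t)) := by
    rw [Real.log_zero, zero_div]
    constructor <;> nlinarith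
  rcases isEmpty_or_nonempty (msupp μ) with hemp | hne
  · have hA0 : A = 0 := by rw [hA]; exact Real.iInf_of_isEmpty _
    have hB0 : B = 0 := by rw [hB]; exact Real.iInf_of_isEmpty _
    rw [hcapS, hcapT, hA0, hB0, inv_zero]
    exact hdeg
  · have hbddS : BddBelow (Set.range fun x : msupp μ =>
        ∫ y, phiKer r θ s m ((x : EuclideanSpace ℝ (Fin n)) - y) ∂μ) :=
      ⟨0, by rintro _ ⟨x, rfl⟩; exact integral_nonneg fun y => phi_nonneg hr0 _⟩
    have hbddT : BddBelow (Set.range fun x : msupp μ =>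
        ∫ y, phiKer r θ t m ((x : EuclideanSpace ℝ (Fin n)) - y) ∂μ) :=
      ⟨0, by rintro _ ⟨x, rfl⟩; exact integral_nonneg fun y => phi_nonneg hr0 _⟩
    have hA0 : 0 ≤ A := le_ciInf fun x => integral_nonneg fun y => phi_nonneg hr0 _
    have hB0 : 0 ≤ B := le_ciInf fun x => integral_nonneg fun y => phi_nonneg hr0 _
    have hAB : A ≤ B := le_ciInf fun x => (ciInf_le hbddS x).trans
      (integral_mono (hint s hs0 hsm _) (hint t ht (hts.trans hsm) _)
        fun y => phi_mono hr0 hr1 hθ1 hts _)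
    have hBcA : B ≤ c * A := by
      have h : B / c ≤ A := by
        refine le_ciInf fun x => ?_
        have h1 : B ≤ ∫ y, phiKer r θ t m ((x : EuclideanSpace ℝ (Fin n)) - y) ∂μ :=
          ciInf_le hbddT x
        have h2 : (∫ y, phiKer r θ t m ((x : EuclideanSpace ℝ (Fin n)) - y) ∂μ)
            ≤ c * ∫ y, phiKer r θ s m ((x : EuclideanSpace ℝ (Fin n)) - y) ∂μ := by
          rw [← integral_const_mul]
          exact integral_mono (hint t ht (hts.trans hsm) _)
            ((hint s hs0 hsm _).const_mul c) fun y => phi_le_c_mul hr0 hr1 hθ1 hts _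
        rw [div_le_iff₀ hc0]
        linarith [h1.trans h2]
      calc B = B / c * c := by field_simp
        _ ≤ A * c := mul_le_mul_of_nonneg_right h hc0.le
        _ = c * A := mul_comm _ _
    rcases hA0.eq_or_lt with hAz | hApos
    · have hBz : B = 0 := le_antisymm (by nlinarith) hB0
      rw [hcapS, hcapT, ← hAz, hBz, inv_zero]
      exact hdeg
    · have hBpos : 0 < B := hApos.trans_le hAB
      have hlogAB : 0 ≤ Real.log B - Real.log A := sub_nonneg.2 (Real.log_le_log hApos hAB)
      have hlogBC : Real.log B ≤ Real.log c + Real.log A := by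
        calc Real.log B ≤ Real.log (c * A) := Real.log_le_log hBpos hBcA
          _ = Real.log c + Real.log A := Real.log_mul (ne_of_gt hc0) (ne_of_gt hApos)
      have hlogc : Real.log c = (t - s) * (1 - θ) * Real.log r := Real.log_rpow hr0 _
      rw [hcapS, hcapT, Real.log_inv, Real.log_inv, neg_div, neg_div]
      have hsub : Real.log B / (-Real.log r) - Real.log A / (-Real.log r)
          = (Real.log B - Real.log A) / (-Real.log r) := (sub_div _ _ _).symm
      have hdn : 0 ≤ (Real.log B - Real.log A) / (-Real.log r) := div_nonneg hlogAB hL.le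
      have hdiv : (Real.log B - Real.log A) / (-Real.log r) ≤ (s - t) * (1 - θ) := by
        rw [div_le_iff₀ hL]
        nlinarith [hlogBC, hlogc]
      constructor
      · linarith
      · linarith
end
end
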